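/- arXiv:quant-ph/0211091 — 6 statements merged into one kernel-verified Lean document; each statement's English description precedes it below -/
import Mathlib

section
/- (Line Lemma) Let p be a prime, n a positive integer, and let y, z be elements of Z_p^n. Let L_{z,y} = { (z + a·y)^(p-1) : a ∈ Z_p }. Then the polynomial y^(p-1) lies in the Z_p-linear span of L_{z,y} inside Z_p[x_1,...,x_n]. -/
open MvPolynomial

/-- **Line Lemma.** For a prime `p` and `y z : (ZMod p)^n`, the polynomial
`y^(p-1)` (the `(p-1)`-st power of the linear form with coefficients `y`)
lies in the `ZMod p`-span of `L_{z,y} = {(z + a • y)^(p-1) : a ∈ ZMod p}`. -/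
theorem line_lemma {p n : ℕ} (hp : p.Prime) (hn : 0 < n) (y z : Fin n → ZMod p) :
    ((∑ j, C (y j) * X j : MvPolynomial (Fin n) (ZMod p)) ^ (p - 1)) ∈
      Submodule.span (ZMod p)
        {P : MvPolynomial (Fin n) (ZMod p) |
          ∃ a : ZMod p, P = (∑ j, C ((z + a • y) j) * X j) ^ (p - 1)} := by
  haveI := Fact.mk hp
  set Y : MvPolynomial (Fin n) (ZMod p) := ∑ j, C (y j) * X j with hY
  set Z : MvPolynomial (Fin n) (ZMod p) := ∑ j, C (z j) * X j with hZ
  have hlin : ∀ a : ZMod p,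
      (∑ j, C ((z + a • y) j) * X j : MvPolynomial (Fin n) (ZMod p)) = Z + C a * Y := by
    intro a
    rw [hY, hZ, Finset.mul_sum, ← Finset.sum_add_distrib]
    apply Finset.sum_congr rfl
    intro j _
    simp only [Pi.add_apply, Pi.smul_apply, smul_eq_mul, map_add, map_mul]
    ring
  -- the key sum over all a
  have hp1 : p - 1 + 1 = p := Nat.succ_pred_eq_of_pos hp.pos
  have hsum : ∑ a : ZMod p, a ^ (p - 1) = -1 := by
    have : ∀ a : ZMod p, a ^ (p - 1) = if a = 0 then 0 else 1 := by
      intro a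
      split
      · subst ‹a = 0›
        exact zero_pow (Nat.sub_ne_zero_of_lt hp.one_lt)
      · exact ZMod.pow_card_sub_one_eq_one ‹a ≠ 0›
    rw [Finset.sum_congr rfl fun a _ => this a]
    have : ∀ a : ZMod p, (if a = 0 then (0 : ZMod p) else 1) = 1 - if a = 0 then 1 else 0 := by
      intro a; split <;> simp
    rw [Finset.sum_congr rfl fun a _ => this a, Finset.sum_sub_distrib,
      Finset.sum_ite_eq' Finset.univ (0 : ZMod p) (fun _ => (1 : ZMod p))]
    simp [ZMod.card, CharP.cast_eq_zero]
  have key : ∑ a : ZMod p, (Z + C a * Y) ^ (p - 1) = -(Y ^ (p - 1)) := by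
    have hpow : ∀ a : ZMod p, (Z + C a * Y) ^ (p - 1)
        = ∑ k ∈ Finset.range p,
            C (a ^ (p - 1 - k)) * (Z ^ k * Y ^ (p - 1 - k) * ((p - 1).choose k : MvPolynomial (Fin n) (ZMod p))) := by
      intro a
      rw [add_pow, hp1]
      apply Finset.sum_congr rfl
      intro k _
      rw [mul_pow, map_pow]
      push_cast
      ring
    rw [Finset.sum_congr rfl fun a _ => hpow a, Finset.sum_comm]
    have : ∀ k ∈ Finset.range p,
        (∑ a : ZMod p, C (a ^ (p - 1 - k)) *
            (Z ^ k * Y ^ (p - 1 - k) * ((p - 1).choose k : MvPolynomial (Fin n) (ZMod p))))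
          = C (∑ a : ZMod p, a ^ (p - 1 - k)) *
            (Z ^ k * Y ^ (p - 1 - k) * ((p - 1).choose k : MvPolynomial (Fin n) (ZMod p))) := by
      intro k _
      rw [map_sum, Finset.sum_mul]
    rw [Finset.sum_congr rfl this]
    rw [Finset.sum_eq_single 0]
    · simp [hsum]
    · intro k hk hk0
      have hklt : k < p := Finset.mem_range.mp hk
      have : ∑ a : ZMod p, a ^ (p - 1 - k) = 0 := by
        have : p - 1 - k < Fintype.card (ZMod p) - 1 := by
          rw [ZMod.card]
          omega
        exact FiniteField.sum_pow_lt_card_sub_one (ZMod p) _ this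
      simp [this]
    · intro h
      exact absurd (Finset.mem_range.mpr hp.pos) h
  have hmem : (∑ a : ZMod p, (Z + C a * Y) ^ (p - 1)) ∈
      Submodule.span (ZMod p)
        {P : MvPolynomial (Fin n) (ZMod p) |
          ∃ a : ZMod p, P = (∑ j, C ((z + a • y) j) * X j) ^ (p - 1)} :=
    Submodule.sum_mem _ fun a _ => Submodule.subset_span ⟨a, by rw [hlin a]⟩
  have : Y ^ (p - 1) = (-1 : ZMod p) • ∑ a : ZMod p, (Z + C a * Y) ^ (p - 1) := by
    rw [key]; simp
  rw [this]
  exact Submodule.smul_mem _ _ hmem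
end

section
/- Let p be a prime, n a positive integer, and let y, z be elements of Z_p^n. Let L_{z,y} = { (z + a·y)^(p-1) : a ∈ Z_p } and M_{z,y} = { z^(k) · y^(p-1-k) : 0 ≤ k ≤ p-1 } (products of polynomials). Then the Z_p-linear span of L_{z,y} equals the Z_p-linear span of M_{z,y} inside Z_p[x_1,...,x_n]. -/
open MvPolynomial

/-!
Binomial expansion writes `(Z + a • Y) ^ d` as a combination of the `Z ^ k * Y ^ (d - k)`.
Conversely, `a ↦ (Z + a • Y) ^ d` is a polynomial of degree `d` in `a` whose coefficient of
`a ^ (d - k)` is `C(d, k) • Z ^ k * Y ^ (d - k)`; when the field has more than `d` elements,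
Lagrange interpolation recovers each coefficient of such a polynomial as a fixed linear combination
of its values. For `d = p - 1` the binomial coefficients `C(p - 1, k)` are units in `ZMod p`.
-/

open Finset Submodule

section Binomial

variable {R A : Type*} [CommSemiring R] [CommSemiring A] [Algebra R A]

lemma add_smul_pow_eq_sum (Z Y : A) (a : R) (d : ℕ) :
    (Z + a • Y) ^ d =
      ∑ k ∈ range (d + 1), (a ^ (d - k) * d.choose k) • (Z ^ k * Y ^ (d - k)) := by
  rw [add_pow]
  refine sum_congr rfl fun k _ => ?_
  simp only [Algebra.smul_def, mul_pow, map_mul, map_pow, map_natCast]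
  ring

lemma add_smul_pow_mem_span_mul_pow (Z Y : A) (a : R) (d : ℕ) :
    (Z + a • Y) ^ d ∈ span R {P | ∃ k ≤ d, P = Z ^ k * Y ^ (d - k)} := by
  rw [add_smul_pow_eq_sum]
  exact sum_mem fun k hk =>
    smul_mem _ _ <| subset_span ⟨k, Nat.lt_succ_iff.mp (mem_range.mp hk), rfl⟩

end Binomial

section BinomialSpan

variable {K A : Type*} [Field K] [CommRing A] [Algebra K A]

lemma Lagrange.sum_coeff_basis_mul_eval [DecidableEq K] (s : Finset K) {f : Polynomial K}
    (hf : f.degree < #s) (m : ℕ) :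
    ∑ a ∈ s, (Lagrange.basis s id a).coeff m * f.eval a = f.coeff m := by
  conv_rhs => rw [Lagrange.eq_interpolate (Set.injOn_id _) hf]
  simp [mul_comm]

lemma choose_smul_mul_pow_mem_span_image {d k : ℕ} (hk : k ≤ d) (s : Finset K) (hs : d < #s)
    (Z Y : A) :
    (d.choose k : K) • (Z ^ k * Y ^ (d - k)) ∈ span K ((fun a : K => (Z + a • Y) ^ d) '' s) := by
  classical
  set w : K → K := fun a => (Lagrange.basis s id a).coeff (d - k)
  have hweights : ∀ j ∈ range (d + 1), ∑ a ∈ s, w a * a ^ (d - j) = if j = k then 1 else 0 := by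
    intro j hj
    have hdeg : (Polynomial.X ^ (d - j) : Polynomial K).degree < #s := by
      rw [Polynomial.degree_X_pow]; exact_mod_cast (Nat.sub_le d j).trans_lt hs
    have := Lagrange.sum_coeff_basis_mul_eval s hdeg (d - k)
    simp only [Polynomial.eval_pow, Polynomial.eval_X, Polynomial.coeff_X_pow] at this
    have hjd := mem_range.mp hj
    rw [this]
    exact if_congr (by omega) rfl rfl
  have hsum : ∑ a ∈ s, w a • (Z + a • Y) ^ d = (d.choose k : K) • (Z ^ k * Y ^ (d - k)) := by
    simp_rw [add_smul_pow_eq_sum, smul_sum, smul_smul]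
    rw [sum_comm]
    simp_rw [← sum_smul, ← mul_assoc, ← sum_mul]
    rw [sum_congr rfl fun j hj => by rw [hweights j hj]]
    simp [ite_smul, Nat.lt_succ_iff.mpr hk]
  rw [← hsum]
  exact sum_mem fun a ha => smul_mem _ _ <| subset_span ⟨a, ha, rfl⟩

theorem span_pow_add_smul_eq_span_mul_pow {d : ℕ} (s : Finset K) (hs : d < #s)
    (hchoose : ∀ k ≤ d, (d.choose k : K) ≠ 0) (Z Y : A) :
    span K {P | ∃ a : K, P = (Z + a • Y) ^ d} = span K {P | ∃ k ≤ d, P = Z ^ k * Y ^ (d - k)} := by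
  apply le_antisymm
  · rw [span_le]
    rintro P ⟨a, rfl⟩
    exact add_smul_pow_mem_span_mul_pow Z Y a d
  · rw [span_le]
    rintro P ⟨k, hk, rfl⟩
    have hmem := choose_smul_mul_pow_mem_span_image hk s hs Z Y
    rw [smul_mem_iff _ (hchoose k hk)] at hmem
    refine span_mono ?_ hmem
    rintro _ ⟨a, -, rfl⟩
    exact ⟨a, rfl⟩

end BinomialSpan

lemma ZMod.natCast_choose_ne_zero {p d k : ℕ} (hp : p.Prime) (hd : d < p) (hk : k ≤ d) :
    (d.choose k : ZMod p) ≠ 0 := by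
  rw [Ne, ZMod.natCast_eq_zero_iff]
  exact hp.coprime_iff_not_dvd.mp (hp.coprime_choose_of_lt hd hk)

lemma MvPolynomial.sum_C_mul_X_add_smul {σ R : Type*} [Fintype σ] [CommSemiring R]
    (z y : σ → R) (a : R) :
    ∑ j, C ((z + a • y) j) * X j = ∑ j, C (z j) * X j + a • ∑ j, C (y j) * X j := by
  simp only [Pi.add_apply, Pi.smul_apply, smul_eq_mul, map_add, map_mul, add_mul, sum_add_distrib,
    smul_sum, smul_eq_C_mul, mul_assoc]

theorem span_line_eq_span_products_general {p n : ℕ} (hp : p.Prime)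
    (y z : Fin n → ZMod p) :
    Submodule.span (ZMod p)
        {P : MvPolynomial (Fin n) (ZMod p) |
          ∃ a : ZMod p, P = (∑ j, C ((z + a • y) j) * X j) ^ (p - 1)} =
      Submodule.span (ZMod p)
        {P : MvPolynomial (Fin n) (ZMod p) |
          ∃ k : ℕ, k ≤ p - 1 ∧
            P = (∑ j, C (z j) * X j) ^ k * (∑ j, C (y j) * X j) ^ (p - 1 - k)} := by
  have : Fact p.Prime := ⟨hp⟩
  have hp1 : p - 1 < p := Nat.sub_one_lt hp.ne_zero
  simp_rw [sum_C_mul_X_add_smul]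
  refine span_pow_add_smul_eq_span_mul_pow univ ?_ (fun k => ZMod.natCast_choose_ne_zero hp hp1) _ _
  rwa [card_univ, ZMod.card]

/-- For a prime `p` and `y z : (ZMod p)^n`, the `ZMod p`-span of
`L_{z,y} = {(z + a • y)^(p-1) : a ∈ ZMod p}` equals the span of
`M_{z,y} = {z^(k) * y^(p-1-k) : 0 ≤ k ≤ p-1}` inside `ZMod p[x_1,…,x_n]`. -/
theorem span_line_eq_span_products {p n : ℕ} (hp : p.Prime) (hn : 0 < n)
    (y z : Fin n → ZMod p) :
    Submodule.span (ZMod p)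
        {P : MvPolynomial (Fin n) (ZMod p) |
          ∃ a : ZMod p, P = (∑ j, C ((z + a • y) j) * X j) ^ (p - 1)} =
      Submodule.span (ZMod p)
        {P : MvPolynomial (Fin n) (ZMod p) |
          ∃ k : ℕ, k ≤ p - 1 ∧
            P = (∑ j, C (z j) * X j) ^ k * (∑ j, C (y j) * X j) ^ (p - 1 - k)} :=
  span_line_eq_span_products_general hp y z
end

section
/- Let p be a prime and n a positive integer. The Z_p-subspace of Z_p[x_1,...,x_n] consisting of all homogeneous polynomials of degree p-1 is spanned by the set of polynomials { y^(p-1) : y ∈ Z_p^n }, i.e., by the (p-1)-st powers of linear forms. -/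
/-!
Over a finite field with `q` elements, `∑ t, t ^ e` is `-1` for `e = q - 1` and `0` for
`e < q - 1`. Weighting the `(q-1)`-st powers of the linear forms `∑ y j • X j` by
`∏ j, y j ^ (q - 1 - m j)` and summing over all `y` therefore extracts the monomial `X ^ m` of
degree `q - 1`, with coefficient `(-1) ^ n` times the multinomial coefficient of `m`. For `q = p`
prime that coefficient divides `(p - 1)!`, so it is a unit and every monomial of degree `p - 1`
lies in the span.
-/

open Finset MvPolynomial

theorem Nat.Prime.not_dvd_multinomial {p : ℕ} (hp : p.Prime) {ι : Type*} (s : Finset ι)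
    (f : ι → ℕ) (h : ∑ i ∈ s, f i < p) : ¬p ∣ Nat.multinomial s f := fun hdvd =>
  (hp.dvd_factorial.1 (hdvd.trans (Nat.multinomial_spec s f ▸ Dvd.intro_left _ rfl))).not_gt h

namespace FiniteField

variable {K : Type*} [Field K] [Fintype K]

theorem sum_pow_card_sub_one : ∑ x : K, x ^ (Fintype.card K - 1) = -1 := by
  classical
  have hq : Fintype.card K - 1 ≠ 0 := Nat.sub_ne_zero_of_lt Fintype.one_lt_card
  rw [← Finset.sum_erase_add _ _ (mem_univ 0), zero_pow hq, add_zero,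
    Finset.sum_congr rfl fun x hx => pow_card_sub_one_eq_one x (ne_of_mem_erase hx)]
  simp [Finset.card_erase_of_mem, Nat.cast_sub Fintype.card_pos]

theorem sum_prod_pow_sub_add {σ : Type*} [Fintype σ] [DecidableEq σ] (m s : σ → ℕ)
    (hm : ∑ j, m j = Fintype.card K - 1) (hs : ∑ j, s j = Fintype.card K - 1) :
    ∑ y : σ → K, ∏ j, y j ^ (Fintype.card K - 1 - m j + s j) =
      if s = m then (-1) ^ Fintype.card σ else 0 := by
  rw [← Fintype.prod_sum fun j (t : K) => t ^ (Fintype.card K - 1 - m j + s j)]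
  split_ifs with h
  · subst h
    have hle : ∀ j, s j ≤ Fintype.card K - 1 := fun j =>
      hs ▸ single_le_sum (fun i _ => Nat.zero_le (s i)) (mem_univ j)
    simp [Nat.sub_add_cancel (hle _), sum_pow_card_sub_one]
  · obtain ⟨j, hj⟩ : ∃ j, s j < m j := by
      by_contra! hle
      exact h (funext fun j =>
        ((sum_eq_sum_iff_of_le fun j _ => hle j).1 (hm.trans hs.symm) j (mem_univ j)).symm)
    have hmj : m j ≤ Fintype.card K - 1 :=
      hm ▸ single_le_sum (fun i _ => Nat.zero_le (m i)) (mem_univ j)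
    exact prod_eq_zero (mem_univ j) (sum_pow_lt_card_sub_one K _ (by omega))

end FiniteField

namespace MvPolynomial

variable {σ R : Type*} [Fintype σ]

noncomputable def linearForm [CommSemiring R] (y : σ → R) : MvPolynomial σ R :=
  ∑ j, C (y j) * X j

theorem isHomogeneous_linearForm_pow [CommSemiring R] (y : σ → R) (d : ℕ) :
    (linearForm y ^ d).IsHomogeneous d := by
  simpa only [linearForm, one_mul] using
    (IsHomogeneous.sum _ _ _ fun j _ => isHomogeneous_C_mul_X (y j) j).pow d

theorem coeff_linearForm_pow [CommSemiring R] (y : σ → R) (s : σ →₀ ℕ) (d : ℕ) :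
    coeff s (linearForm y ^ d) = if s.degree = d then s.multinomial * ∏ j, y j ^ s j else 0 := by
  simp only [linearForm, ← smul_eq_C_mul, coeff_linearCombination_X_pow_of_fintype,
    Finsupp.prod_fintype _ _ fun _ => pow_zero _]
  rfl

theorem sum_prod_pow_smul_linearForm_pow {K : Type*} [Field K] [Fintype K] [DecidableEq σ]
    (m : σ →₀ ℕ) (hm : m.degree = Fintype.card K - 1) :
    ∑ y : σ → K,
        (∏ j, y j ^ (Fintype.card K - 1 - m j)) • linearForm y ^ (Fintype.card K - 1) =
      ((-1) ^ Fintype.card σ * m.multinomial : K) • monomial m 1 := by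
  ext s
  simp only [coeff_sum, coeff_smul, coeff_linearForm_pow, coeff_monomial, smul_eq_mul]
  by_cases hs : s.degree = Fintype.card K - 1
  · have hsum := FiniteField.sum_prod_pow_sub_add (K := K) m s (m.degree_eq_sum ▸ hm)
      (s.degree_eq_sum ▸ hs)
    simp only [hs, if_true, mul_left_comm _ (s.multinomial : K), ← mul_sum, ← prod_mul_distrib,
      ← pow_add, hsum, DFunLike.coe_fn_eq, eq_comm (a := s)]
    split_ifs with hms <;> simp [hms, mul_comm]
  · have hms : m ≠ s := by rintro rfl; exact hs hm
    simp [hs, hms]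

theorem monomial_mem_span_linearForm_pow {p : ℕ} [Fact p.Prime] (m : σ →₀ ℕ)
    (hm : m.degree = p - 1) :
    monomial m 1 ∈ Submodule.span (ZMod p)
      {P : MvPolynomial σ (ZMod p) | ∃ y : σ → ZMod p, P = linearForm y ^ (p - 1)} := by
  classical
  set c : ZMod p := (-1) ^ Fintype.card σ * m.multinomial
  have hc : c ≠ 0 := by
    refine mul_ne_zero (pow_ne_zero _ (neg_ne_zero.2 one_ne_zero)) ?_
    rw [Ne, ZMod.natCast_eq_zero_iff, Finsupp.multinomial_eq]
    refine (Fact.out : p.Prime).not_dvd_multinomial _ _ ?_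
    rw [← Finsupp.degree_apply, hm]
    exact Nat.sub_lt (Fact.out : p.Prime).pos one_pos
  have hsum := sum_prod_pow_smul_linearForm_pow (K := ZMod p) m (by rwa [ZMod.card])
  rw [ZMod.card, ← inv_smul_eq_iff₀ hc] at hsum
  rw [← hsum]
  exact Submodule.smul_mem _ _ (Submodule.sum_mem _ fun y _ =>
    Submodule.smul_mem _ _ (Submodule.subset_span ⟨y, rfl⟩))

end MvPolynomial

theorem homogeneous_spanned_by_powers_of_linear_forms_general {p n : ℕ} (hp : p.Prime) :
    homogeneousSubmodule (Fin n) (ZMod p) (p - 1) =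
      Submodule.span (ZMod p)
        {P : MvPolynomial (Fin n) (ZMod p) |
          ∃ y : Fin n → ZMod p, P = (∑ j, C (y j) * X j) ^ (p - 1)} := by
  have := Fact.mk hp
  apply le_antisymm
  · rw [homogeneousSubmodule_eq_finsupp_supported, AddMonoidAlgebra.supported_eq_span_single,
      Submodule.span_le]
    rintro _ ⟨m, hm, rfl⟩
    exact monomial_mem_span_linearForm_pow m hm
  · rw [Submodule.span_le]
    rintro _ ⟨y, rfl⟩
    exact isHomogeneous_linearForm_pow y (p - 1)

/-- For a prime `p`, the space of homogeneous polynomials of degree `p-1` in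
`ZMod p[x_1,…,x_n]` is spanned by the `(p-1)`-st powers of linear forms,
i.e. by `{ y^(p-1) : y ∈ (ZMod p)^n }`. -/
theorem homogeneous_spanned_by_powers_of_linear_forms {p n : ℕ} (hp : p.Prime)
    (hn : 0 < n) :
    homogeneousSubmodule (Fin n) (ZMod p) (p - 1) =
      Submodule.span (ZMod p)
        {P : MvPolynomial (Fin n) (ZMod p) |
          ∃ y : Fin n → ZMod p, P = (∑ j, C (y j) * X j) ^ (p - 1)} :=
  homogeneous_spanned_by_powers_of_linear_forms_general hp
end

section
/- Let p be a prime, n a positive integer, W a Z_p-submodule of Z_p[x_1,...,x_n], and y ∈ Z_p^n with y^(p-1) ∉ W. Then for every z ∈ Z_p^n there exists a ∈ Z_p such that (z + a·y)^(p-1) ∉ W. In other words, every coset of the line spanned by y contains an element whose (p-1)-st power polynomial lies outside W. -/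
open MvPolynomial

lemma zmod_sum_pow_lt {p : ℕ} [Fact p.Prime] {i : ℕ} (hi : i < p - 1) :
    ∑ a : ZMod p, a ^ i = 0 := by
  have := FiniteField.sum_pow_lt_card_sub_one (K := ZMod p) i (by rwa [ZMod.card])
  exact this

lemma zmod_sum_pow_eq (p : ℕ) [hp : Fact p.Prime] :
    ∑ a : ZMod p, a ^ (p - 1) = -1 := by
  have hm : p - 1 ≠ 0 := by have := hp.out.two_le; omega
  have h0 : (0 : ZMod p) ∈ Finset.univ := Finset.mem_univ _
  rw [← Finset.sum_erase_add _ _ h0, zero_pow hm, add_zero]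
  have : ∀ a ∈ Finset.univ.erase (0 : ZMod p), a ^ (p - 1) = 1 := fun a ha =>
    ZMod.pow_card_sub_one_eq_one (Finset.mem_erase.mp ha).1
  rw [Finset.sum_congr rfl this, Finset.sum_const, nsmul_eq_mul, mul_one]
  rw [Finset.card_erase_of_mem h0, Finset.card_univ, ZMod.card]
  rw [Nat.cast_sub hp.out.one_le, ZMod.natCast_self]
  ring

/-- If `y^(p-1) ∉ W` for a `ZMod p`-submodule `W` of the polynomial ring, then
every coset of the line spanned by `y` contains an element `z + a • y` whose
`(p-1)`-st power polynomial lies outside `W`. -/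
theorem coset_contains_elt_outside {p n : ℕ} (hp : p.Prime) (hn : 0 < n)
    (W : Submodule (ZMod p) (MvPolynomial (Fin n) (ZMod p)))
    (y : Fin n → ZMod p)
    (hy : (∑ j, C (y j) * X j : MvPolynomial (Fin n) (ZMod p)) ^ (p - 1) ∉ W) :
    ∀ z : Fin n → ZMod p, ∃ a : ZMod p,
      (∑ j, C ((z + a • y) j) * X j : MvPolynomial (Fin n) (ZMod p)) ^ (p - 1) ∉ W := by
  haveI : Fact p.Prime := ⟨hp⟩
  intro z
  by_contra h
  push_neg at h
  set m := p - 1 with hm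
  have hm0 : 0 < m := by have := hp.two_le; omega
  set A : MvPolynomial (Fin n) (ZMod p) := ∑ j, C (z j) * X j with hA
  set B : MvPolynomial (Fin n) (ZMod p) := ∑ j, C (y j) * X j with hB
  have hlin : ∀ a : ZMod p,
      (∑ j, C ((z + a • y) j) * X j : MvPolynomial (Fin n) (ZMod p))
        = A + C a * B := by
    intro a
    simp only [hA, hB, Pi.add_apply, Pi.smul_apply, smul_eq_mul, map_add, map_mul,
      add_mul, Finset.sum_add_distrib, Finset.mul_sum, mul_assoc]
  have hS : (∑ a : ZMod p, (A + C a * B) ^ m) ∈ W := by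
    apply Submodule.sum_mem
    intro a _
    rw [← hlin a]
    exact h a
  have hcalc : (∑ a : ZMod p, (A + C a * B) ^ m) = - B ^ m := by
    have expand : ∀ a : ZMod p, (A + C a * B) ^ m
        = ∑ k ∈ Finset.range (m + 1),
            C (a ^ (m - k)) * (A ^ k * B ^ (m - k) * (m.choose k : MvPolynomial (Fin n) (ZMod p))) := by
      intro a
      rw [add_pow]
      refine Finset.sum_congr rfl fun k _ => ?_
      rw [mul_pow, ← map_pow]
      ring
    rw [Finset.sum_congr rfl fun a _ => expand a, Finset.sum_comm]
    have step : ∀ k ∈ Finset.range (m + 1),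
        (∑ a : ZMod p, C (a ^ (m - k)) * (A ^ k * B ^ (m - k) * (m.choose k : MvPolynomial (Fin n) (ZMod p))))
        = (if k = 0 then (-1 : MvPolynomial (Fin n) (ZMod p)) else 0) * (A ^ k * B ^ (m - k) * (m.choose k : MvPolynomial (Fin n) (ZMod p))) := by
      intro k hk
      rw [← Finset.sum_mul, ← map_sum]
      congr 1
      by_cases hk0 : k = 0
      · subst hk0
        simp only [Nat.sub_zero, if_true]
        rw [hm, zmod_sum_pow_eq p, map_neg, map_one]
      · rw [if_neg hk0]
        have : m - k < p - 1 := by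
          have hk' : k ≤ m := Nat.lt_succ_iff.mp (Finset.mem_range.mp hk)
          omega
        rw [zmod_sum_pow_lt this, map_zero]
    rw [Finset.sum_congr rfl step]
    simp only [ite_mul, zero_mul, neg_one_mul]
    rw [Finset.sum_ite_eq' (Finset.range (m + 1)) 0
      (fun k => -(A ^ k * B ^ (m - k) * (m.choose k : MvPolynomial (Fin n) (ZMod p))))]
    simp
  rw [hcalc] at hS
  exact hy (by simpa [hB] using (neg_mem_iff.mp hS))
end

section
/- Let p be a prime, n a positive integer, and let u, v ∈ Z_p^n both be nonzero. Suppose that for every function e : {1,...,n} → ℕ with e_1 + ... + e_n = p - 1 one has u_1^{e_1}·...·u_n^{e_n} = v_1^{e_1}·...·v_n^{e_n} in Z_p. Then there exists a nonzero scalar a ∈ Z_p with u = a·v. -/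
/-- If two nonzero vectors `u v ∈ (ZMod p)^n` have equal values on all monomials
of total degree `p - 1` (i.e. `∏ u_j^{e_j} = ∏ v_j^{e_j}` whenever
`∑ e_j = p - 1`), then `u = a • v` for some nonzero scalar `a ∈ ZMod p`. -/
theorem eq_scalar_multiple_of_monomials_eq {p n : ℕ} (hp : p.Prime) (hn : 0 < n)
    (u v : Fin n → ZMod p) (hu : u ≠ 0) (hv : v ≠ 0)
    (h : ∀ e : Fin n → ℕ, (∑ j, e j) = p - 1 →
      (∏ j, u j ^ e j) = ∏ j, v j ^ e j) :
    ∃ a : ZMod p, a ≠ 0 ∧ u = a • v := by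
  haveI : Fact p.Prime := ⟨hp⟩
  have hp2 : 2 ≤ p := hp.two_le
  have hp1 : p - 1 ≠ 0 := by omega
  have fermat : ∀ x : ZMod p, x ≠ 0 → x ^ (p - 1) = 1 := fun x hx =>
    ZMod.pow_card_sub_one_eq_one hx
  have key1 : ∀ j, u j ^ (p - 1) = v j ^ (p - 1) := by
    intro j
    have hh := h (Pi.single j (p - 1)) (by simp)
    rwa [Finset.prod_eq_single j (fun k _ hk => by simp [Pi.single_eq_of_ne hk]) (by simp),
      Finset.prod_eq_single j (fun k _ hk => by simp [Pi.single_eq_of_ne hk]) (by simp),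
      Pi.single_eq_same] at hh
  obtain ⟨i, hvi⟩ : ∃ i, v i ≠ 0 := by
    by_contra hc; push_neg at hc; exact hv (funext hc)
  have hui : u i ≠ 0 := by
    intro h0
    have := key1 i
    rw [h0, zero_pow hp1, fermat _ hvi] at this
    exact one_ne_zero this.symm
  have key2 : ∀ j, u j * v i = u i * v j := by
    intro j
    by_cases hji : j = i
    · subst hji; ring
    by_cases hvj : v j = 0
    · have huj : u j = 0 := by
        have := key1 j
        rw [hvj, zero_pow hp1] at this
        exact (pow_eq_zero_iff hp1).mp this
      rw [huj, hvj]; ring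
    · have he : (∑ k, (Pi.single i (p - 2) + Pi.single j 1 : Fin n → ℕ) k) = p - 1 := by
        simp only [Pi.add_apply, Finset.sum_add_distrib]
        simp
        omega
      have hmain := h _ he
      have hprod : ∀ w : Fin n → ZMod p,
          (∏ k, w k ^ (Pi.single i (p - 2) + Pi.single j 1 : Fin n → ℕ) k)
            = w i ^ (p - 2) * w j := by
        intro w
        rw [show (∏ k, w k ^ (Pi.single i (p - 2) + Pi.single j 1 : Fin n → ℕ) k)
            = (∏ k, w k ^ (Pi.single i (p - 2) : Fin n → ℕ) k)
              * ∏ k, w k ^ (Pi.single j 1 : Fin n → ℕ) k from by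
          rw [← Finset.prod_mul_distrib]
          exact Finset.prod_congr rfl fun k _ => by simp [pow_add]]
        congr 1
        · rw [Finset.prod_eq_single i (fun k _ hk => by simp [Pi.single_eq_of_ne hk])
            (by simp)]
          simp
        · rw [Finset.prod_eq_single j (fun k _ hk => by simp [Pi.single_eq_of_ne hk])
            (by simp)]
          simp
      rw [hprod u, hprod v] at hmain
      have e1u : u i ^ (p - 2) * u i = 1 := by
        rw [← pow_succ, show p - 2 + 1 = p - 1 from by omega, fermat _ hui]
      have e1v : v i ^ (p - 2) * v i = 1 := by
        rw [← pow_succ, show p - 2 + 1 = p - 1 from by omega, fermat _ hvi]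
      calc u j * v i = (u i ^ (p - 2) * u i) * (u j * v i) := by rw [e1u]; ring
        _ = (u i ^ (p - 2) * u j) * (u i * v i) := by ring
        _ = (v i ^ (p - 2) * v j) * (u i * v i) := by rw [hmain]
        _ = (v i ^ (p - 2) * v i) * (u i * v j) := by ring
        _ = u i * v j := by rw [e1v]; ring
  refine ⟨u i * (v i)⁻¹, mul_ne_zero hui (inv_ne_zero hvi), funext fun j => ?_⟩
  have := key2 j
  have : u j = u i * (v i)⁻¹ * v j := by
    field_simp
    linear_combination key2 j
  simpa [Pi.smul_apply, smul_eq_mul] using this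
end

section
/- Let G be a finite abelian (additive) group, S a finite set, f_0 : G → S an injective function, u ∈ G, and define f_1 : G → S by f_1(x) = f_0(x - u) (so that f_1(x + u) = f_0(x) for all x). Then for every complex-valued additive character χ of G and every sign ε ∈ {+1, -1}: Σ_{s ∈ S} | (Σ_{x ∈ G, f_0(x) = s} χ(x)) + ε · (Σ_{x ∈ G, f_1(x) = s} χ(x)) |² = |G| · |1 + ε·χ(u)|², where |·| on complex numbers is the complex absolute value. -/
/-!
Translating by `u` turns the fibre sums of `f₁` into `χ u` times those of `f₀`, so each summand
factors as `‖∑_{f₀ x = s} χ x‖² · ‖1 + ε χ u‖²`. Since `f₀` is injective its fibres are empty or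
singletons, and `‖χ x‖ = 1`, so the fibre sums contribute `|G|` in total.
-/

open Finset

theorem Finset.sum_apply_sum_fiberwise_of_injective {ι κ M N : Type*} [Fintype ι] [Fintype κ]
    [DecidableEq κ] [AddCommMonoid M] [AddCommMonoid N] {f : ι → κ} (hf : Function.Injective f)
    (g : ι → M) {h : M → N} (h0 : h 0 = 0) :
    ∑ j, h (∑ i with f i = j, g i) = ∑ i, h (g i) := by
  rw [← sum_fiberwise univ f fun i => h (g i)]
  refine sum_congr rfl fun j _ => ?_
  by_cases hj : j ∈ Set.range f
  · obtain ⟨i, rfl⟩ := hj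
    have hfiber : ({i' | f i' = f i} : Finset ι) = {i} := by ext; simp [hf.eq_iff]
    simp [hfiber]
  · have hfiber : ({i' | f i' = j} : Finset ι) = ∅ := by
      ext i; simpa using fun h => hj ⟨i, h⟩
    simp [hfiber, h0]

theorem Finset.sum_filter_eq_sum_filter_comp_add_right {G S M : Type*} [AddGroup G] [Fintype G]
    [DecidableEq S] [AddCommMonoid M] {f₀ f₁ : G → S} {u : G} (hf : ∀ x, f₁ (x + u) = f₀ x)
    (g : G → M) (s : S) :
    ∑ x with f₁ x = s, g x = ∑ x with f₀ x = s, g (x + u) := by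
  simp only [sum_filter]
  exact (Fintype.sum_equiv (Equiv.addRight u) _ _ fun x => by simp [hf]).symm

theorem AddChar.sum_filter_eq_mul_sum_filter {G S R : Type*} [AddGroup G] [Fintype G]
    [DecidableEq S] [CommSemiring R] {f₀ f₁ : G → S} {u : G} (hf : ∀ x, f₁ (x + u) = f₀ x)
    (χ : AddChar G R) (s : S) :
    ∑ x with f₁ x = s, χ x = χ u * ∑ x with f₀ x = s, χ x := by
  simp only [sum_filter_eq_sum_filter_comp_add_right hf, AddChar.map_add_eq_mul, mul_sum,
    mul_comm]

theorem fourier_sampling_identity_general {G : Type*} [AddCommGroup G] [Fintype G]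
    {S : Type*} [Fintype S] [DecidableEq S]
    (f₀ f₁ : G → S) (hinj : Function.Injective f₀) (u : G)
    (hf : ∀ x : G, f₁ (x + u) = f₀ x)
    (χ : AddChar G ℂ) (ε : ℂ) :
    ∑ s : S, ‖(∑ x ∈ univ.filter fun x => f₀ x = s, χ x) +
          ε * ∑ x ∈ univ.filter fun x => f₁ x = s, χ x‖ ^ 2 =
      (Fintype.card G : ℝ) * ‖1 + ε * χ u‖ ^ 2 := by
  have hfactor : ∀ s, (∑ x with f₀ x = s, χ x) + ε * ∑ x with f₁ x = s, χ x =
      (∑ x with f₀ x = s, χ x) * (1 + ε * χ u) := fun s => by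
    rw [χ.sum_filter_eq_mul_sum_filter hf]; ring
  calc _ = ∑ s, ‖∑ x with f₀ x = s, χ x‖ ^ 2 * ‖1 + ε * χ u‖ ^ 2 := by
        simp only [hfactor, norm_mul, mul_pow]
    _ = ∑ x, ‖χ x‖ ^ 2 * ‖1 + ε * χ u‖ ^ 2 :=
        sum_apply_sum_fiberwise_of_injective hinj χ (h := fun z => ‖z‖ ^ 2 * _) (by simp)
    _ = _ := by
        simp only [AddChar.norm_apply, one_pow, one_mul, sum_const, card_univ, nsmul_eq_mul]

/-- Fourier sampling analysis for hidden translation: with `f₁(x+u) = f₀(x)`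
and `f₀` injective, for every additive character `χ` of the finite abelian
group `G` and every sign `ε = ±1`,
`∑_s |∑_{f₀(x)=s} χ(x) + ε ∑_{f₁(x)=s} χ(x)|² = |G| · |1 + ε χ(u)|²`. -/
theorem fourier_sampling_identity {G : Type*} [AddCommGroup G] [Fintype G]
    {S : Type*} [Fintype S] [DecidableEq S]
    (f₀ f₁ : G → S) (hinj : Function.Injective f₀) (u : G)
    (hf : ∀ x : G, f₁ (x + u) = f₀ x)
    (χ : AddChar G ℂ) (ε : ℂ) (hε : ε = 1 ∨ ε = -1) :
    ∑ s : S, ‖(∑ x ∈ univ.filter fun x => f₀ x = s, χ x) +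
          ε * ∑ x ∈ univ.filter fun x => f₁ x = s, χ x‖ ^ 2 =
      (Fintype.card G : ℝ) * ‖1 + ε * χ u‖ ^ 2 :=
  fourier_sampling_identity_general f₀ f₁ hinj u hf χ ε
end
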